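/- Assume (A1). Then there exist constants 0 < C₅, C₆ < ∞ such that for all η > 0 and all x ∈ Z^d, ℙ( sup{ d(x,y) : y ∈ Z^d, ‖x−y‖₁ < η‖x‖₁ } ≥ C₅ η ‖x‖₁ ) ≤ e^{−C₆ η ‖x‖₁}, where d(x,y) := max(a(x,y), a(y,x)). -/

import Mathlib

/-!
For `ω ≥ 0`, a single geodesic from `x` to `y` already gives
`a(x,y) ≤ ‖x-y‖₁ log(2d) + ∑_{z on the geodesic} ω(z)`. Put `t = η‖x‖₁`. If `t < 1` the only
candidate is `y = x`, with `d(x,x) = 0`. Otherwise the event forces, for one of the at most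
`(2t+1)^d ≤ e^{2dt}` sites `y` of the `ℓ¹`-ball of radius `t`, the sum of `ω` over the at most
`2(t+1)` distinct sites of the geodesics `x → y` and `y → x` to be at least `(C₅ - log 2d) t`.
By independence and the exponential Chebyshev inequality, with `M = E[e^{γω(0)}] < ∞` by (A1),
this has probability at most `e^{-γ(C₅ - log 2d) t} M^{2(t+1)}`, and the union bound is at most
`e^{-t}` once `γ(C₅ - log 2d) = 2d + 4 log M + 1`.
-/

open MeasureTheory ProbabilityTheory Filter Set
open scoped ENNReal NNReal BigOperators Topology

namespace RWRP

/-- Sites of the lattice `ℤ^d`. -/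
abbrev Site (d : ℕ) := Fin d → ℤ

variable {d : ℕ}

/-- ℓ¹ distance between two sites, as a natural number. -/
def dist1 (u v : Site d) : ℕ := ∑ i, (u i - v i).natAbs

/-- ℓ¹ norm of a site, as a real number. -/
noncomputable def norm1 (x : Site d) : ℝ := ∑ i, |(x i : ℝ)|

/-- ℓ^∞ norm of a site, as a real number. -/
noncomputable def norminf (x : Site d) : ℝ :=
  ((Finset.univ.sup fun i => (x i).natAbs : ℕ) : ℝ)

/-- A nearest-neighbour path on `ℤ^d`, encoded as the list of its successive positions. -/
def IsNNPath (r : List (Site d)) : Prop := r.Chain' fun u v => dist1 u v = 1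

/-- `AdmissiblePath V x y r` : `r` is a nearest-neighbour path from `x` to `y` which stays
in `V` and visits `y` exactly at its final point.  Such paths are in natural bijection with
the trajectories of the simple random walk started at `x` and stopped at the hitting time
`H(y)`, restricted to the event `{H(y) < T_V}`. -/
def AdmissiblePath (V : Set (Site d)) (x y : Site d) (r : List (Site d)) : Prop :=
  IsNNPath r ∧ r.head? = some x ∧ r.getLast? = some y ∧
    (∀ z ∈ r.dropLast, z ≠ y) ∧ ∀ z ∈ r, z ∈ V

/-- The weight of a path `r` for the simple random walk in the potential `ω` :
`(2d)^{-(|r|-1)} exp(-∑_{k<|r|-1} ω(r_k))`.  The weight of `r` is exactly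
`E^x[exp(-∑_{k=0}^{H(y)-1} ω(S_k)) ; (S_0, …, S_{H(y)}) = r]`. -/
noncomputable def pathWeight (ω : Site d → ℝ) (r : List (Site d)) : ℝ≥0∞ :=
  (2 * (d : ℝ≥0∞))⁻¹ ^ (r.length - 1) *
    ENNReal.ofReal (Real.exp (-((r.dropLast.map ω).sum)))

/-- `eCostE ω V x y = E^x[exp(-∑_{k=0}^{H(y)-1} ω(S_k)) 1_{H(y) < T_V}]`, as an
extended nonnegative real. -/
noncomputable def eCostE (ω : Site d → ℝ) (V : Set (Site d)) (x y : Site d) : ℝ≥0∞ :=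
  ∑' r : {r : List (Site d) // AdmissiblePath V x y r}, pathWeight ω r

/-- `eCost ω V x y = E^x[exp(-∑_{k=0}^{H(y)-1} ω(S_k)) 1_{H(y) < T_V}]`, as a real number. -/
noncomputable def eCost (ω : Site d → ℝ) (V : Set (Site d)) (x y : Site d) : ℝ :=
  (eCostE ω V x y).toReal

/-- The travel cost `a_V(x,y,ω) = -log e_V(x,y,ω)`, real-valued. -/
noncomputable def aCost (ω : Site d → ℝ) (V : Set (Site d)) (x y : Site d) : ℝ :=
  -Real.log (eCost ω V x y)

/-- The travel cost `a_V(x,y,ω) = -log e_V(x,y,ω)` with values in `[0,∞]`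
(it equals `∞` when `e_V(x,y,ω) = 0`, i.e. when no admissible path exists). -/
noncomputable def aCostE (ω : Site d → ℝ) (V : Set (Site d)) (x y : Site d) : ℝ≥0∞ :=
  if eCostE ω V x y = 0 then ⊤ else ENNReal.ofReal (aCost ω V x y)

/-- The total weight of the admissible paths from `0` to `x` (in the whole lattice)
satisfying the additional condition `p`; equals
`E^0[exp(-∑_{k=0}^{H(x)-1} ω(S_k)) 1_{H(x)<∞} 1_{p}]`. -/
noncomputable def qMass (ω : Site d → ℝ) (x : Site d) (p : List (Site d) → Prop) : ℝ≥0∞ :=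
  ∑' r : {r : List (Site d) // AdmissiblePath Set.univ 0 x r ∧ p r}, pathWeight ω r

/-- `qProb ω x p = Q_ω^{0,x}(p)`, the probability, under the weighted path measure
`Q_ω^{0,x}`, that the walk stopped at `H(x)` satisfies `p`. -/
noncomputable def qProb (ω : Site d → ℝ) (x : Site d) (p : List (Site d) → Prop) : ℝ :=
  ((eCostE ω Set.univ 0 x)⁻¹ * qMass ω x p).toReal

/-- The number of distinct sites visited by the walk strictly before the end of the
path `r`, i.e. `#A` with `A = {S_k ; 0 ≤ k < H(x)}`. -/
noncomputable def rangeSize (r : List (Site d)) : ℕ := r.dropLast.toFinset.card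

/-- `qIntegral ω x f = Ê_ω^{0,x}[f]`, the expectation of the path functional `f` under the
weighted path measure `Q_ω^{0,x}`. -/
noncomputable def qIntegral (ω : Site d → ℝ) (x : Site d) (f : List (Site d) → ℝ≥0∞) : ℝ :=
  ((eCostE ω Set.univ 0 x)⁻¹ *
    ∑' r : {r : List (Site d) // AdmissiblePath Set.univ 0 x r}, pathWeight ω r.1 * f r.1).toReal

/-- `qRange ω x = Ê_ω^{0,x}[#A]`, the mean size of the range of the walk before hitting `x`
under the weighted path measure. -/
noncomputable def qRange (ω : Site d → ℝ) (x : Site d) : ℝ :=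
  qIntegral ω x fun r => (rangeSize r : ℝ≥0∞)

/-- A path realizing the first return of the walk to the origin. -/
def ReturnPath (r : List (Site d)) : Prop :=
  IsNNPath r ∧ r.head? = some 0 ∧ r.getLast? = some 0 ∧ 2 ≤ r.length ∧
    ∀ z ∈ r.dropLast.tail, z ≠ (0 : Site d)

/-- `returnProb d = P^0(H₂(0) < ∞)`, the probability that the simple random walk on `ℤ^d`
returns to its starting point. -/
noncomputable def returnProb (d : ℕ) : ℝ :=
  (∑' r : {r : List (Site d) // ReturnPath r}, pathWeight (fun _ : Site d => (0 : ℝ)) r.1).toReal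

/-- The cube `[-C‖x‖₁, C‖x‖₁]^d ∩ ℤ^d`. -/
def box (x : Site d) (C : ℝ) : Set (Site d) := {z | ∀ i, |((z i : ℤ) : ℝ)| ≤ C * norm1 x}

/-- The truncated potential `ω̂ = ω ∧ (4d/γ) log ‖x‖₁`. -/
noncomputable def trunc (γ : ℝ) (x : Site d) (ω : Site d → ℝ) : Site d → ℝ :=
  fun z => min (ω z) (4 * d / γ * Real.log (norm1 x))

/-- The entropy `Ent(X) = E[X log X] - E[X] log E[X]` of a random variable under `μ`. -/
noncomputable def entropy {Ω : Type*} [MeasurableSpace Ω] (μ : Measure Ω) (X : Ω → ℝ) : ℝ :=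
  (∫ ω, X ω * Real.log (X ω) ∂μ) - (∫ ω, X ω ∂μ) * Real.log (∫ ω, X ω ∂μ)


lemma dist1_comm (x y : Site d) : dist1 x y = dist1 y x := by
  unfold dist1; congr 1; funext i; omega

lemma dist1_eq_zero_iff {x y : Site d} : dist1 x y = 0 ↔ x = y := by
  simp only [dist1, Finset.sum_eq_zero_iff, Finset.mem_univ, true_implies, Int.natAbs_eq_zero,
    sub_eq_zero, funext_iff]

lemma norm1_sub (x y : Site d) : norm1 (x - y) = dist1 x y := by
  simp [norm1, dist1, Nat.cast_natAbs]

lemma eq_of_norm1_sub_lt_one {x y : Site d} (h : norm1 (x - y) < 1) : x = y := by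
  rw [norm1_sub, Nat.cast_lt_one] at h
  exact dist1_eq_zero_iff.mp h

lemma natAbs_sub_le_dist1 (x y : Site d) (i : Fin d) : (x i - y i).natAbs ≤ dist1 x y :=
  Finset.single_le_sum (f := fun j => (x j - y j).natAbs) (fun _ _ => Nat.zero_le _)
    (Finset.mem_univ i)

lemma dist1_update (u v : Site d) (i : Fin d) (a : ℤ) :
    dist1 (Function.update u i a) v =
      (a - v i).natAbs + ∑ j ∈ Finset.univ.erase i, (u j - v j).natAbs := by
  rw [dist1, ← Finset.add_sum_erase _ _ (Finset.mem_univ i), Function.update_self]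
  congr 1
  refine Finset.sum_congr rfl fun j hj => ?_
  rw [Function.update_of_ne (Finset.ne_of_mem_erase hj)]

lemma exists_dist1_eq_one_and_succ {x y : Site d} (h : x ≠ y) :
    ∃ x', dist1 x x' = 1 ∧ dist1 x' y + 1 = dist1 x y := by
  obtain ⟨i, hi⟩ := Function.ne_iff.mp h
  obtain ⟨a, hax, hay⟩ :
      ∃ a : ℤ, (a - x i).natAbs = 1 ∧ (a - y i).natAbs + 1 = (x i - y i).natAbs :=
    ⟨if x i < y i then x i + 1 else x i - 1, by split_ifs <;> omega⟩
  have hx : dist1 x y = (x i - y i).natAbs + ∑ j ∈ Finset.univ.erase i, (x j - y j).natAbs := by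
    simpa using dist1_update x y i (x i)
  have hxx : ∑ j ∈ Finset.univ.erase i, (x j - x j).natAbs = 0 := by simp
  refine ⟨Function.update x i a, ?_, ?_⟩
  · rw [dist1_comm, dist1_update, hxx, hax]
  · rw [dist1_update, hx]
    omega

lemma exists_geodesic_aux (y : Site d) (n : ℕ) : ∀ x : Site d, dist1 x y = n →
    ∃ r : List (Site d), IsNNPath r ∧ r.head? = some x ∧ r.getLast? = some y ∧
      r.length = n + 1 ∧ r.Pairwise fun u v => dist1 v y < dist1 u y := by
  induction n with
  | zero =>
    intro x hx
    obtain rfl := dist1_eq_zero_iff.mp hx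
    exact ⟨[x], List.isChain_singleton _, rfl, rfl, rfl, List.pairwise_singleton _ _⟩
  | succ n ih =>
    intro x hx
    obtain ⟨x', hxx', hx'y⟩ := exists_dist1_eq_one_and_succ (x := x) (y := y) (by
      rintro rfl; simp [dist1_eq_zero_iff.mpr rfl] at hx)
    obtain ⟨r, hchain, hhead, hlast, hlen, hpw⟩ := ih x' (by omega)
    obtain ⟨l, rfl⟩ : ∃ l, r = x' :: l := by
      cases r with
      | nil => simp at hhead
      | cons a l => simp only [List.head?_cons, Option.some.injEq] at hhead; exact ⟨l, hhead ▸ rfl⟩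
    refine ⟨x :: x' :: l, List.isChain_cons_cons.mpr ⟨hxx', hchain⟩, rfl, ?_, ?_, ?_⟩
    · rwa [List.getLast?_cons_cons]
    · simp only [List.length_cons] at hlen ⊢; omega
    · refine List.Pairwise.cons (fun z hz => ?_) hpw
      rcases List.mem_cons.mp hz with rfl | hz
      · omega
      · have := List.rel_of_pairwise_cons hpw hz
        omega

lemma exists_geodesic (x y : Site d) :
    ∃ r : List (Site d), AdmissiblePath Set.univ x y r ∧ r.length = dist1 x y + 1 ∧ r.Nodup := by
  obtain ⟨r, hchain, hhead, hlast, hlen, hpw⟩ := exists_geodesic_aux y _ x rfl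
  have hr : r ≠ [] := by rintro rfl; simp at hlen
  have hy : r.getLast hr = y := by simpa [List.getLast?_eq_some_getLast hr] using hlast
  refine ⟨r, ⟨hchain, hhead, hlast, fun z hz => ?_, fun z _ => Set.mem_univ z⟩, hlen,
    hpw.imp fun h huv => (huv ▸ h).false⟩
  rw [← List.dropLast_append_getLast hr, hy] at hpw
  have := (List.pairwise_append.mp hpw).2.2 z hz y (List.mem_singleton_self y)
  rintro rfl
  simp [dist1_eq_zero_iff.mpr rfl] at this

lemma toReal_pathWeight (ω : Site d → ℝ) (r : List (Site d)) :
    (pathWeight ω r).toReal =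
      (2 * (d : ℝ))⁻¹ ^ (r.length - 1) * Real.exp (-(r.dropLast.map ω).sum) := by
  simp [pathWeight, ENNReal.toReal_mul, ENNReal.toReal_pow, ENNReal.toReal_inv,
    (Real.exp_pos _).le]

lemma aCost_le_of_admissiblePath (hd : d ≠ 0) {ω : Site d → ℝ} (hω : ∀ z, 0 ≤ ω z)
    {V : Set (Site d)} {x y : Site d} {r : List (Site d)} (hr : AdmissiblePath V x y r) :
    aCost ω V x y ≤ (r.length - 1 : ℕ) * Real.log (2 * d) + (r.dropLast.map ω).sum := by
  have hlog : 0 ≤ Real.log (2 * d) := by exact_mod_cast Real.log_natCast_nonneg (2 * d)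
  have hsum : 0 ≤ (r.dropLast.map ω).sum :=
    List.sum_nonneg (List.forall_mem_map.mpr fun z _ => hω z)
  have hw : 0 < (pathWeight ω r).toReal := by rw [toReal_pathWeight]; positivity
  have hlogw : -Real.log (pathWeight ω r).toReal =
      (r.length - 1 : ℕ) * Real.log (2 * d) + (r.dropLast.map ω).sum := by
    rw [toReal_pathWeight, Real.log_mul (by positivity) (Real.exp_pos _).ne', Real.log_pow,
      Real.log_inv, Real.log_exp]
    ring
  by_cases htop : eCostE ω V x y = ⊤
  · simp only [aCost, eCost, htop, ENNReal.toReal_top, Real.log_zero, neg_zero]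
    positivity
  · have hle : (pathWeight ω r).toReal ≤ eCost ω V x y :=
      ENNReal.toReal_mono htop (ENNReal.le_tsum (⟨r, hr⟩ : {r // AdmissiblePath V x y r}))
    rw [← hlogw]
    exact neg_le_neg (Real.log_le_log hw hle)

lemma admissiblePath_self_iff {V : Set (Site d)} {x : Site d} (hx : x ∈ V) {r : List (Site d)} :
    AdmissiblePath V x x r ↔ r = [x] := by
  refine ⟨fun ⟨_, hhead, _, hne, _⟩ => ?_, ?_⟩
  · match r, hhead with
    | [_], rfl => rfl
    | _ :: _ :: _, rfl => exact absurd rfl (hne x (by simp))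
  · rintro rfl
    exact ⟨List.isChain_singleton _, rfl, rfl, by simp, by simpa using hx⟩

lemma aCost_self {V : Set (Site d)} {x : Site d} (hx : x ∈ V) (ω : Site d → ℝ) :
    aCost ω V x x = 0 := by
  have hsingle : ∀ r : {r // AdmissiblePath V x x r},
      r = ⟨[x], (admissiblePath_self_iff hx).mpr rfl⟩ :=
    fun r => Subtype.ext ((admissiblePath_self_iff hx).mp r.2)
  rw [aCost, eCost, eCostE, tsum_eq_single _ fun r hr => absurd (hsingle r) hr]
  simp [pathWeight]

lemma exists_finset_aCost_le (hd : d ≠ 0) (x y : Site d) :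
    ∃ P : Finset (Site d), P.card ≤ dist1 x y + 1 ∧ ∀ ω : Site d → ℝ, (∀ z, 0 ≤ ω z) →
      aCost ω Set.univ x y ≤ dist1 x y * Real.log (2 * d) + ∑ z ∈ P, ω z := by
  classical
  obtain ⟨r, hr, hlen, hnodup⟩ := exists_geodesic x y
  refine ⟨r.toFinset, hlen ▸ r.toFinset_card_le, fun ω hω => ?_⟩
  have hdrop : (r.dropLast.map ω).sum ≤ ∑ z ∈ r.toFinset, ω z := by
    rw [List.sum_toFinset _ hnodup]
    exact ((List.dropLast_sublist r).map ω).sum_le_sum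
      (List.forall_mem_map.mpr fun z _ => hω z)
  calc aCost ω Set.univ x y ≤ (r.length - 1 : ℕ) * Real.log (2 * d) + (r.dropLast.map ω).sum :=
        aCost_le_of_admissiblePath hd hω hr
    _ ≤ dist1 x y * Real.log (2 * d) + ∑ z ∈ r.toFinset, ω z := by
        rw [hlen, Nat.add_sub_cancel]
        gcongr

lemma exists_finset_max_aCost_le (hd : d ≠ 0) (x y : Site d) :
    ∃ P : Finset (Site d), P.card ≤ 2 * (dist1 x y + 1) ∧ ∀ ω : Site d → ℝ, (∀ z, 0 ≤ ω z) →
      max (aCost ω Set.univ x y) (aCost ω Set.univ y x) ≤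
        dist1 x y * Real.log (2 * d) + ∑ z ∈ P, ω z := by
  classical
  obtain ⟨P, hP, hPω⟩ := exists_finset_aCost_le hd x y
  obtain ⟨Q, hQ, hQω⟩ := exists_finset_aCost_le hd y x
  rw [dist1_comm y x] at hQ hQω
  refine ⟨P ∪ Q, (Finset.card_union_le P Q).trans (by omega), fun ω hω => max_le ?_ ?_⟩
  · grw [hPω ω hω, Finset.sum_le_sum_of_subset_of_nonneg Finset.subset_union_left
      fun z _ _ => hω z]
  · grw [hQω ω hω, Finset.sum_le_sum_of_subset_of_nonneg Finset.subset_union_right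
      fun z _ _ => hω z]

section Chernoff

variable {Ω ι : Type*} [MeasurableSpace Ω] {μ : Measure Ω} [IsProbabilityMeasure μ]

lemma one_le_mgf_of_nonneg {X : Ω → ℝ} {t : ℝ} (ht : 0 ≤ t) (hX : 0 ≤ᵐ[μ] X)
    (hint : Integrable (fun ω => Real.exp (t * X ω)) μ) : 1 ≤ mgf X μ t := by
  have h := integral_mono_ae (integrable_const (1 : ℝ)) hint <| by
    filter_upwards [hX] with ω hω using Real.one_le_exp (mul_nonneg ht hω)
  simpa [mgf] using h

lemma measure_le_sum_le_of_iIndepFun {X : ι → Ω → ℝ} {X₀ : Ω → ℝ}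
    (hmeas : ∀ i, Measurable (X i)) (hindep : iIndepFun X μ)
    (hident : ∀ i, IdentDistrib (X i) X₀ μ μ) {t : ℝ} (ht : 0 ≤ t)
    (hint : Integrable (fun ω => Real.exp (t * X₀ ω)) μ) (s : Finset ι) (ε : ℝ) :
    μ {ω | ε ≤ ∑ i ∈ s, X i ω} ≤ ENNReal.ofReal (Real.exp (-t * ε) * mgf X₀ μ t ^ s.card) := by
  have hmgf : mgf (∑ i ∈ s, X i) μ t = mgf X₀ μ t ^ s.card := by
    rw [hindep.mgf_sum hmeas, Finset.prod_eq_pow_card fun i _ =>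
      mgf_congr_of_identDistrib _ _ (hident i) t]
  have hintsum := hindep.integrable_exp_mul_sum hmeas (s := s) fun i _ =>
    ((hident i).comp (measurable_const_mul t).exp).integrable_iff.mpr hint
  have h := measure_ge_le_exp_mul_mgf ε ht hintsum
  rw [hmgf] at h
  simp only [Finset.sum_apply] at h
  rw [← ofReal_measureReal]
  exact ENNReal.ofReal_le_ofReal h

end Chernoff

noncomputable def l1Ball (x : Site d) (m : ℕ) : Finset (Site d) :=
  (Finset.Icc (fun i => x i - m) (fun i => x i + m)).filter fun y => dist1 x y ≤ m

lemma mem_l1Ball {x y : Site d} {m : ℕ} : y ∈ l1Ball x m ↔ dist1 x y ≤ m := by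
  refine ⟨fun h => (Finset.mem_filter.mp h).2, fun h => Finset.mem_filter.mpr ⟨?_, h⟩⟩
  rw [Finset.mem_Icc, Pi.le_def, Pi.le_def]
  have := fun i => (natAbs_sub_le_dist1 x y i).trans h
  constructor <;> intro i <;> have := this i <;> omega

lemma card_l1Ball_le (x : Site d) (m : ℕ) : (l1Ball x m).card ≤ (2 * m + 1) ^ d := by
  refine (Finset.card_filter_le _ _).trans_eq ?_
  rw [Pi.card_Icc, Finset.prod_eq_pow_card (b := 2 * m + 1) fun i _ => by rw [Int.card_Icc]; omega,
    Finset.card_univ, Fintype.card_fin]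

lemma pow_mul_exp_mul_pow_le_exp {n m : ℕ} {t M : ℝ} (hmt : m ≤ t) (ht : 1 ≤ t) (hM : 1 ≤ M) :
    (((2 * m + 1) ^ n : ℕ) : ℝ) * (Real.exp (-((2 * n + 4 * Real.log M + 1) * t)) *
      M ^ (2 * (m + 1))) ≤ Real.exp (-t) := by
  have hball : (((2 * m + 1) ^ n : ℕ) : ℝ) ≤ Real.exp (2 * n * t) := by
    calc (((2 * m + 1) ^ n : ℕ) : ℝ) ≤ Real.exp (2 * m) ^ n := by
          push_cast
          gcongr
          linarith [Real.add_one_le_exp (2 * m)]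
      _ = Real.exp (n * (2 * m)) := (Real.exp_nat_mul _ n).symm
      _ ≤ Real.exp (2 * n * t) :=
          Real.exp_le_exp.mpr <| by nlinarith [(n.cast_nonneg : (0 : ℝ) ≤ n)]
  have hpow : M ^ (2 * (m + 1)) ≤ Real.exp (Real.log M * (4 * t)) := by
    rw [← Real.rpow_natCast, ← Real.rpow_def_of_pos (by linarith)]
    exact Real.rpow_le_rpow_of_exponent_le hM (by push_cast; linarith)
  calc _ ≤ Real.exp (2 * n * t) * (Real.exp (-((2 * n + 4 * Real.log M + 1) * t)) *
        Real.exp (Real.log M * (4 * t))) := by gcongr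
    _ = Real.exp (-t) := by rw [← Real.exp_add, ← Real.exp_add]; ring_nf

def largeCostEvent (C η : ℝ) (x : Site d) : Set (Site d → ℝ) :=
  {ω | ∃ y : Site d, norm1 (x - y) < η * norm1 x ∧
    C * η * norm1 x ≤ max (aCost ω Set.univ x y) (aCost ω Set.univ y x)}

lemma largeCostEvent_eq_empty {C η : ℝ} {x : Site d} (hC : 0 < C) (ht : η * norm1 x < 1) :
    largeCostEvent C η x = ∅ := by
  refine Set.eq_empty_of_forall_notMem fun ω ⟨y, hy, hcost⟩ => ?_
  obtain rfl := eq_of_norm1_sub_lt_one (hy.trans ht)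
  have : 0 < η * norm1 x := (norm1_sub x x ▸ Nat.cast_nonneg _).trans_lt hy
  rw [aCost_self (Set.mem_univ x), max_self, mul_assoc] at hcost
  nlinarith

section LargeDeviation

variable {μ : Measure (Site d → ℝ)} [IsProbabilityMeasure μ]
  (hindep : iIndepFun (fun z : Site d => fun ω => ω z) μ)
  (hident : ∀ z : Site d, IdentDistrib (fun ω => ω z) (fun ω => ω 0) μ μ)
  (hpos : ∀ᵐ ω ∂μ, ∀ z : Site d, 0 ≤ ω z) {γ : ℝ} (hγ : 0 < γ)
  (hA1 : Integrable (fun ω => Real.exp (γ * ω 0)) μ)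
include hpos hγ hA1

lemma one_le_mgf_site : 1 ≤ mgf (fun ω : Site d → ℝ => ω 0) μ γ :=
  one_le_mgf_of_nonneg hγ.le (hpos.mono fun _ hω => hω 0) hA1

include hindep hident

lemma measure_largeCostEvent_le {η : ℝ} {x : Site d} (ht : 1 ≤ η * norm1 x) :
    μ (largeCostEvent
        ((2 * d + 4 * Real.log (mgf (fun ω => ω 0) μ γ) + 1) / γ + Real.log (2 * d)) η x) ≤
      ENNReal.ofReal (Real.exp (-(η * norm1 x))) := by
  set M := mgf (fun ω : Site d → ℝ => ω 0) μ γ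
  set B := 2 * d + 4 * Real.log M + 1
  set t := η * norm1 x with ht_def
  have hd : d ≠ 0 := by rintro rfl; simp [t, norm1] at ht; linarith
  choose P hPcard hP using exists_finset_max_aCost_le hd x
  set m := ⌊t⌋₊
  have hmt : (m : ℝ) ≤ t := Nat.floor_le (by linarith)
  have hcover : ∀ᵐ ω ∂μ, ω ∈ largeCostEvent (B / γ + Real.log (2 * d)) η x →
      ω ∈ ⋃ y ∈ l1Ball x m, {ω | B / γ * t ≤ ∑ z ∈ P y, ω z} := by
    filter_upwards [hpos] with ω hω ⟨y, hy, hcost⟩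
    rw [norm1_sub] at hy
    refine Set.mem_biUnion (mem_l1Ball.mpr (Nat.le_floor hy.le)) ?_
    have := (hP y ω hω).trans' hcost
    have : dist1 x y * Real.log (2 * d) ≤ t * Real.log (2 * d) := by
      gcongr
      exact_mod_cast Real.log_natCast_nonneg (2 * d)
    simp only [Set.mem_ofPred_eq]
    nlinarith
  calc _ ≤ _ := measure_mono_ae hcover
    _ ≤ ∑ y ∈ l1Ball x m, μ {ω | B / γ * t ≤ ∑ z ∈ P y, ω z} := measure_biUnion_finset_le _ _
    _ ≤ ∑ y ∈ l1Ball x m, ENNReal.ofReal (Real.exp (-(B * t)) * M ^ (2 * (m + 1))) := by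
      refine Finset.sum_le_sum fun y hy => ?_
      grw [measure_le_sum_le_of_iIndepFun (fun z => measurable_pi_apply z) hindep hident hγ.le hA1]
      have hcard : (P y).card ≤ 2 * (m + 1) :=
        (hPcard y).trans (Nat.mul_le_mul_left 2 (Nat.succ_le_succ (mem_l1Ball.mp hy)))
      refine ENNReal.ofReal_le_ofReal (mul_le_mul ?_ ?_ (pow_nonneg mgf_nonneg _) (by positivity))
      · exact Real.exp_le_exp.mpr (le_of_eq (by field_simp))
      · exact pow_le_pow_right₀ (one_le_mgf_site hpos hγ hA1) hcard
    _ ≤ (((2 * m + 1) ^ d : ℕ) : ℝ≥0∞) *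
        ENNReal.ofReal (Real.exp (-(B * t)) * M ^ (2 * (m + 1))) := by
      rw [Finset.sum_const, nsmul_eq_mul]
      gcongr
      exact card_l1Ball_le x m
    _ ≤ ENNReal.ofReal (Real.exp (-t)) := by
      rw [← ENNReal.ofReal_natCast, ← ENNReal.ofReal_mul (Nat.cast_nonneg _)]
      exact ENNReal.ofReal_le_ofReal
        (pow_mul_exp_mul_pow_le_exp hmt ht (one_le_mgf_site hpos hγ hA1))

end LargeDeviation

theorem maximal_lemma_general
    (d : ℕ) (μ : Measure ((Site d) → ℝ)) [IsProbabilityMeasure μ]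
    (hindep : iIndepFun (fun z : Site d => fun ω => ω z) μ)
    (hident : ∀ z : Site d, IdentDistrib (fun ω => ω z) (fun ω => ω 0) μ μ)
    (hpos : ∀ᵐ ω ∂μ, ∀ z : Site d, 0 ≤ ω z)
    (γ : ℝ) (hγ : 0 < γ)
    (hA1 : Integrable (fun ω => Real.exp (γ * ω 0)) μ) :
    ∃ C₅ C₆ : ℝ, 0 < C₅ ∧ 0 < C₆ ∧ ∀ η : ℝ, 0 < η → ∀ x : Site d,
      μ {ω | ∃ y : Site d, norm1 (x - y) < η * norm1 x ∧
            C₅ * η * norm1 x ≤ max (aCost ω Set.univ x y) (aCost ω Set.univ y x)} ≤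
        ENNReal.ofReal (Real.exp (-C₆ * η * norm1 x)) := by
  have hM := one_le_mgf_site hpos hγ hA1
  have hC₅ : 0 < (2 * d + 4 * Real.log (mgf (fun ω => ω 0) μ γ) + 1) / γ + Real.log (2 * d) := by
    have := Real.log_nonneg hM
    have : 0 ≤ Real.log (2 * d) := by exact_mod_cast Real.log_natCast_nonneg (2 * d)
    positivity
  refine ⟨_, 1, hC₅, one_pos, fun η _ x => ?_⟩
  rw [neg_one_mul, neg_mul]
  obtain ht | ht := lt_or_ge (η * norm1 x) 1
  · change μ (largeCostEvent _ η x) ≤ _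
    simp [largeCostEvent_eq_empty hC₅ ht]
  · exact measure_largeCostEvent_le hindep hident hpos hγ hA1 ht

/-- **Lemma 2.4** (maximal lemma).  Under (A1) there are constants `0 < C₅, C₆ < ∞` such
that for all `η > 0` and `x ∈ ℤ^d`,
`ℙ(sup{d(x,y) : ‖x-y‖₁ < η‖x‖₁} ≥ C₅ η ‖x‖₁) ≤ exp(-C₆ η ‖x‖₁)`,
where `d(x,y) = a(x,y) ∨ a(y,x)`. -/
theorem maximal_lemma
    (d : ℕ) (hd : 2 ≤ d) (μ : Measure ((Site d) → ℝ)) [IsProbabilityMeasure μ]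
    (hindep : iIndepFun (fun z : Site d => fun ω => ω z) μ)
    (hident : ∀ z : Site d, IdentDistrib (fun ω => ω z) (fun ω => ω 0) μ μ)
    (hpos : ∀ᵐ ω ∂μ, ∀ z : Site d, 0 ≤ ω z)
    (hnontriv : μ {ω | ω 0 = 0} < 1)
    (γ : ℝ) (hγ : 0 < γ)
    (hA1 : Integrable (fun ω => Real.exp (γ * ω 0)) μ) :
    ∃ C₅ C₆ : ℝ, 0 < C₅ ∧ 0 < C₆ ∧ ∀ η : ℝ, 0 < η → ∀ x : Site d,
      μ {ω | ∃ y : Site d, norm1 (x - y) < η * norm1 x ∧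
            C₅ * η * norm1 x ≤ max (aCost ω Set.univ x y) (aCost ω Set.univ y x)} ≤
        ENNReal.ofReal (Real.exp (-C₆ * η * norm1 x)) :=
  maximal_lemma_general d μ hindep hident hpos γ hγ hA1

end RWRP
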